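/- arXiv:2205.14279 — 3 statements merged into one kernel-verified Lean document; each statement's English description precedes it below -/
import Mathlib

section
/- Let φ: (A,m,K) → (B,n,L) be a local homomorphism of noetherian local rings. Then φ is basically regular if and only if rd(φ) = 0, if and only if edim(B) = edim(A) + edim(B/mB), if and only if δ_A(I) = δ_B^φ(I) for every proper ideal I of A. -/
/-!
Everything is read off the `L`-linear map `ψ : L ⊗_K m/m² → n/n²`, whose nullity is `rd φ`.
Minimal bases of `m` are exactly the lifts of bases of `m/m²`, and a basis of `m/m²` stays a
basis of `L ⊗_K m/m²`; so `φ` is basically regular iff `ψ` is injective.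
For `I ⊆ m`, the image of `IB` in `n/n²` spans `ψ (L ⊗ image of I)`. For `I = m` this is the
range of `ψ`, which is also the kernel of the surjection of `n/n²` onto the cotangent space of
`B/mB`; rank–nullity gives `rd φ + δ(mB) = edim A` and `edim B = edim (B/mB) + δ(mB)`.
An injective `ψ` preserves dimensions of spans, so `δ(IB) = δ(I)`; conversely
`δ(mB) = δ(m) = edim A` forces `rd φ = 0`.
-/

open IsLocalRing

section Prelim

variable {A : Type*} [CommRing A] [IsLocalRing A]
variable {B : Type*} [CommRing B] [IsLocalRing B]

/-- The embedding dimension of a local ring: `dim_K m/m²`. -/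
noncomputable def edim (A : Type*) [CommRing A] [IsLocalRing A] : ℕ :=
  Module.finrank (ResidueField A) (CotangentSpace A)

/-- `δ_A(I) = dim_K (I + m²)/m²`, realized as the dimension of the image of `I` in `m/m²`. -/
noncomputable def delta (I : Ideal A) : ℕ :=
  Module.finrank (ResidueField A)
    (Submodule.span (ResidueField A)
      ((maximalIdeal A).toCotangent '' {x : maximalIdeal A | (x : A) ∈ I}))

/-- `x₁, …, x_r ∈ I` form part of a minimal basis of `I`: their images in `I/mI` are
linearly independent over the residue field. -/
def IsPartOfMinBasis {r : ℕ} (I : Ideal A) (x : Fin r → A) : Prop :=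
  (∀ i, x i ∈ I) ∧
    ∀ c : Fin r → A, (∑ i, c i * x i) ∈ maximalIdeal A * I → ∀ i, c i ∈ maximalIdeal A

/-- `x₁, …, x_r` form a minimal basis (minimal generating set) of `I`. -/
def IsMinBasis {r : ℕ} (I : Ideal A) (x : Fin r → A) : Prop :=
  IsPartOfMinBasis I x ∧ Ideal.span (Set.range x) = I

theorem map_mem_maximalIdeal (φ : A →+* B) [IsLocalHom φ] {a : A}
    (ha : a ∈ maximalIdeal A) : φ a ∈ maximalIdeal B :=
  fun h => ha (IsLocalHom.map_nonunit a h)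

/-- The map `m/m² → n/n²` induced by a local homomorphism, as a `ℤ`-linear map. -/
noncomputable def gmap (φ : A →+* B) [IsLocalHom φ] :
    (maximalIdeal A).Cotangent →ₗ[ℤ] (maximalIdeal B).Cotangent :=
  Ideal.mapCotangent (R := ℤ) (maximalIdeal A) (maximalIdeal B) φ.toIntAlgHom
    (fun _ ha => map_mem_maximalIdeal φ ha)

/-- The natural `K`-linear map `m/m² → n/n²` induced by a local homomorphism, where `n/n²` is
viewed as a `K`-vector space via the induced map of residue fields `K → L`. -/
noncomputable def cotangentMap (φ : A →+* B) [IsLocalHom φ] :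
    letI : Module (ResidueField A) (CotangentSpace B) :=
      Module.compHom _ (ResidueField.map φ)
    CotangentSpace A →ₗ[ResidueField A] CotangentSpace B :=
  letI : Module (ResidueField A) (CotangentSpace B) :=
    Module.compHom _ (ResidueField.map φ)
  { toFun := gmap φ
    map_add' := fun x y => map_add (gmap φ) x y
    map_smul' := by
      intro k x
      obtain ⟨a, rfl⟩ := IsLocalRing.residue_surjective k
      obtain ⟨m, rfl⟩ := Ideal.toCotangent_surjective _ x
      show gmap φ ((residue A a) • (maximalIdeal A).toCotangent m) =
        (ResidueField.map φ (residue A a)) • gmap φ ((maximalIdeal A).toCotangent m)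
      rw [ResidueField.map_residue]
      have h1 : (residue A a) • (maximalIdeal A).toCotangent m
          = (maximalIdeal A).toCotangent (a • m) := rfl
      have h2 : (residue B (φ a)) • (maximalIdeal B).toCotangent
            ⟨φ m, map_mem_maximalIdeal φ m.2⟩
          = (maximalIdeal B).toCotangent
            ((φ a) • ⟨φ m, map_mem_maximalIdeal φ m.2⟩) := rfl
      have h3 : gmap φ ((maximalIdeal A).toCotangent m) =
          (maximalIdeal B).toCotangent ⟨φ m, map_mem_maximalIdeal φ m.2⟩ :=
        Ideal.mapCotangent_toCotangent _ _ _ _ m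
      have h4 : gmap φ ((maximalIdeal A).toCotangent (a • m)) =
          (maximalIdeal B).toCotangent ⟨φ (a • m), map_mem_maximalIdeal φ (a • m).2⟩ :=
        Ideal.mapCotangent_toCotangent _ _ _ _ (a • m)
      rw [h1, h4, h3, h2]
      congr 1
      ext
      exact map_mul φ a m }

/-- The regularity defect `rd(φ)`: the nullity (dimension over `L` of the kernel) of the
natural `L`-linear map `L ⊗_K m/m² → n/n²` induced by `φ`. -/
noncomputable def rd (φ : A →+* B) [IsLocalHom φ] : ℕ :=
  letI : Algebra (ResidueField A) (ResidueField B) := (ResidueField.map φ).toAlgebra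
  letI : Module (ResidueField A) (CotangentSpace B) :=
    Module.compHom _ (ResidueField.map φ)
  letI : IsScalarTower (ResidueField A) (ResidueField B) (CotangentSpace B) :=
    IsScalarTower.of_algebraMap_smul fun _ _ => rfl
  Module.finrank (ResidueField B)
    (LinearMap.ker (LinearMap.liftBaseChange (ResidueField B) (cotangentMap φ)))

/-- `φ` is basically regular: every minimal basis of `m` is mapped by `φ` to part of a
minimal basis of `n`. -/
def BasicallyRegular (φ : A →+* B) : Prop :=
  ∀ (r : ℕ) (x : Fin r → A), IsMinBasis (maximalIdeal A) x →
    IsPartOfMinBasis (maximalIdeal B) (fun i => φ (x i))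

instance quotIsLocalRing (I : Ideal A) [Nontrivial (A ⧸ I)] : IsLocalRing (A ⧸ I) :=
  IsLocalRing.of_surjective' _ Ideal.Quotient.mk_surjective

instance quotMkIsLocalHom (I : Ideal A) [Nontrivial (A ⧸ I)] :
    IsLocalHom (Ideal.Quotient.mk I) :=
  IsLocalHom.of_surjective _ Ideal.Quotient.mk_surjective

instance mapQuotNontrivial (φ : A →+* B) [IsLocalHom φ] (I : Ideal A) [Nontrivial (A ⧸ I)] :
    Nontrivial (B ⧸ I.map φ) := by
  refine Ideal.Quotient.nontrivial_iff.mpr fun h => ?_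
  have hI : I ≠ ⊤ := by
    intro hI
    exact one_ne_zero ((Ideal.Quotient.eq_zero_iff_mem.mpr (hI ▸ Submodule.mem_top)).symm.trans
      (map_one (Ideal.Quotient.mk I))).symm
  have hle : I.map φ ≤ maximalIdeal B := by
    rw [Ideal.map_le_iff_le_comap]
    exact fun a ha => map_mem_maximalIdeal φ (IsLocalRing.le_maximalIdeal hI ha)
  exact (maximalIdeal.isMaximal B).ne_top (top_le_iff.mp (h ▸ hle))

instance quotientMapIsLocalHom (φ : A →+* B) [IsLocalHom φ] {I : Ideal A} {J : Ideal B}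
    {h : I ≤ J.comap φ} [Nontrivial (B ⧸ J)] :
    IsLocalHom (Ideal.quotientMap J φ h) := by
  constructor
  intro x hx
  obtain ⟨a, rfl⟩ := Ideal.Quotient.mk_surjective x
  rw [Ideal.quotientMap_mk] at hx
  exact ((IsLocalHom.map_nonunit a (IsLocalHom.map_nonunit (φ a) hx))).map
    (Ideal.Quotient.mk I)

instance maxPowQuotNontrivial : Nontrivial (B ⧸ (maximalIdeal B) ^ 2) :=
  Ideal.Quotient.nontrivial_iff.mpr fun h =>
    (maximalIdeal.isMaximal B).ne_top (top_le_iff.mp (h ▸ Ideal.pow_le_self two_ne_zero))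

/-- A local ring is regular when its Krull dimension equals its embedding dimension. -/
def IsRegularLocal (A : Type*) [CommRing A] [IsLocalRing A] : Prop :=
  ringKrullDim A = (edim A : WithBot (WithTop ℕ))

end Prelim

open Module Submodule

section LinearAlgebra

theorem LinearMap.injective_iff_linearIndependent_comp_basis {R M N ι : Type*} [Ring R]
    [AddCommGroup M] [Module R M] [AddCommGroup N] [Module R N] (g : M →ₗ[R] N)
    (b : Basis ι R M) : Function.Injective g ↔ LinearIndependent R (g ∘ b) := by
  refine ⟨fun hg => b.linearIndependent.map' g (ker_eq_bot.mpr hg), fun h x y hxy => ?_⟩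
  rw [← b.linearCombination_repr x, ← b.linearCombination_repr y,
    Finsupp.apply_linearCombination, Finsupp.apply_linearCombination] at hxy
  exact b.repr.injective (h hxy)

theorem Module.finrank_compHom_of_surjective {K₁ K₂ M : Type*} [Field K₁] [Field K₂]
    (σ : K₁ →+* K₂) (hσ : Function.Surjective σ) [AddCommGroup M] [Module K₂ M] :
    letI := Module.compHom M σ
    finrank K₁ M = finrank K₂ M :=
  letI := Module.compHom M σ
  congrArg Cardinal.toNat
    (rank_eq_of_equiv_equiv σ (AddEquiv.refl M) ⟨σ.injective, hσ⟩ fun _ _ => rfl)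

variable {K L V W : Type*} [Field K] [Field L] [Algebra K L] [AddCommGroup V] [Module K V]
  [AddCommGroup W] [Module L W] [Module K W] [IsScalarTower K L W] (f : V →ₗ[K] W)

namespace LinearMap

theorem injective_liftBaseChange_iff {ι : Type*} (b : Basis ι K V) :
    Function.Injective (f.liftBaseChange L) ↔ LinearIndependent L (f ∘ b) := by
  rw [injective_iff_linearIndependent_comp_basis _ (b.baseChange L)]
  congr!
  ext i
  simp

theorem finrank_ker_liftBaseChange_add_finrank_span [FiniteDimensional K V] :
    finrank L (ker (f.liftBaseChange L)) + finrank L (span L (Set.range f)) = finrank K V := by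
  rw [← coe_range, ← range_liftBaseChange, add_comm, finrank_range_add_finrank_ker,
    finrank_baseChange]

theorem finrank_span_image_of_injective_liftBaseChange
    (hf : Function.Injective (f.liftBaseChange L)) (s : Set V) :
    finrank L (span L (f '' s)) = finrank K (span K s) := by
  have : span L (f '' s) = ((span K s).baseChange L).map (f.liftBaseChange L) := by
    rw [baseChange_span, map_span, ← Set.image_comp]
    congr! 1
    ext v
    simp
  rw [this, ← (equivMapOfInjective _ hf _).finrank_eq,
    ← (toBaseChange.toLinearEquiv L _).finrank_eq, finrank_baseChange]

end LinearMap

end LinearAlgebra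

section LocalRing

variable {R : Type*} [CommRing R] [IsLocalRing R]

theorem toCotangent_sum_smul {r : ℕ} (c : Fin r → R) (y : Fin r → maximalIdeal R) :
    (maximalIdeal R).toCotangent (∑ i, c i • y i)
      = ∑ i, residue R (c i) • (maximalIdeal R).toCotangent (y i) := by
  simp only [map_sum, map_smul]
  rfl

theorem isPartOfMinBasis_maximalIdeal_iff {r : ℕ} (x : Fin r → R)
    (hx : ∀ i, x i ∈ maximalIdeal R) :
    IsPartOfMinBasis (maximalIdeal R) x ↔
      LinearIndependent (ResidueField R) fun i => (maximalIdeal R).toCotangent ⟨x i, hx i⟩ := by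
  have hsum : ∀ c : Fin r → R, (∑ i, c i * x i) ∈ maximalIdeal R * maximalIdeal R ↔
      ∑ i, residue R (c i) • (maximalIdeal R).toCotangent ⟨x i, hx i⟩ = 0 := fun c => by
    rw [← toCotangent_sum_smul, Ideal.toCotangent_eq_zero, pow_two]
    simp
  rw [Fintype.linearIndependent_iff]
  refine ⟨fun ⟨_, h⟩ g hg i => ?_, fun h => ⟨hx, fun c hc i => ?_⟩⟩
  · choose c hc using fun i => residue_surjective (g i)
    obtain rfl : (fun i => residue R (c i)) = g := funext hc
    exact (residue_eq_zero_iff _).mpr (h c ((hsum c).mpr hg) i)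
  · exact (residue_eq_zero_iff _).mp (h _ ((hsum c).mp hc) i)

theorem span_range_eq_maximalIdeal_iff [IsNoetherianRing R] {r : ℕ} (x : Fin r → R)
    (hx : ∀ i, x i ∈ maximalIdeal R) :
    Ideal.span (Set.range x) = maximalIdeal R ↔
      span (ResidueField R) (Set.range fun i => (maximalIdeal R).toCotangent ⟨x i, hx i⟩)
        = ⊤ := by
  rw [Set.range_comp' (maximalIdeal R).toCotangent fun i => (⟨x i, hx i⟩ : maximalIdeal R),
    CotangentSpace.span_image_eq_top_iff,
    ← (map_injective_of_injective (injective_subtype _)).eq_iff, map_span, Submodule.map_top,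
    range_subtype, ← Set.range_comp]
  rfl

theorem exists_isMinBasis_maximalIdeal [IsNoetherianRing R] :
    ∃ (r : ℕ) (x : Fin r → R), IsMinBasis (maximalIdeal R) x := by
  let b := Module.finBasis (ResidueField R) (CotangentSpace R)
  choose y hy using fun i => (maximalIdeal R).toCotangent_surjective (b i)
  refine ⟨_, fun i => y i, ?_, ?_⟩
  · rw [isPartOfMinBasis_maximalIdeal_iff _ fun i => (y i).2]
    simpa only [hy] using b.linearIndependent
  · rw [span_range_eq_maximalIdeal_iff _ fun i => (y i).2]
    simpa only [hy] using b.span_eq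

theorem image_toCotangent_setOf_mem_maximalIdeal :
    (maximalIdeal R).toCotangent '' {x | (x : R) ∈ maximalIdeal R} = Set.univ := by
  simp only [SetLike.coe_mem, Set.ofPred_true, Set.image_univ, Set.range_eq_univ]
  exact Ideal.toCotangent_surjective _

theorem delta_maximalIdeal : delta (maximalIdeal R) = edim R := by
  rw [delta, image_toCotangent_setOf_mem_maximalIdeal, span_univ, finrank_top, edim]

end LocalRing

section LocalHom

variable {A B : Type*} [CommRing A] [IsLocalRing A] [CommRing B] [IsLocalRing B]

theorem gmap_toCotangent (φ : A →+* B) [IsLocalHom φ] (x : maximalIdeal A) :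
    gmap φ ((maximalIdeal A).toCotangent x)
      = (maximalIdeal B).toCotangent ⟨φ x, map_mem_maximalIdeal φ x.2⟩ :=
  Ideal.mapCotangent_toCotangent _ _ _ _ x

theorem gmap_quotient_mk_surjective (J : Ideal B) [Nontrivial (B ⧸ J)] :
    Function.Surjective (gmap (Ideal.Quotient.mk J)) := by
  intro y
  obtain ⟨⟨z, hz⟩, rfl⟩ := Ideal.toCotangent_surjective _ y
  obtain ⟨b, rfl⟩ := Ideal.Quotient.mk_surjective z
  exact ⟨_, gmap_toCotangent _ ⟨b, fun hb => hz (hb.map _)⟩⟩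

theorem ker_cotangentMap_quotient_mk (J : Ideal B) [Nontrivial (B ⧸ J)] :
    letI := Module.compHom (CotangentSpace (B ⧸ J)) (ResidueField.map (Ideal.Quotient.mk J))
    LinearMap.ker (cotangentMap (Ideal.Quotient.mk J))
      = span (ResidueField B) ((maximalIdeal B).toCotangent '' {x | (x : B) ∈ J}) := by
  let := Module.compHom (CotangentSpace (B ⧸ J)) (ResidueField.map (Ideal.Quotient.mk J))
  refine le_antisymm (fun y hy => ?_) (span_le.mpr ?_)
  · obtain ⟨z, rfl⟩ := Ideal.toCotangent_surjective _ y
    change gmap _ _ = 0 at hy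
    have hz : Ideal.Quotient.mk J z ∈ (maximalIdeal B ^ 2).map (Ideal.Quotient.mk J) := by
      rw [Ideal.map_pow, map_maximalIdeal_of_surjective _ Ideal.Quotient.mk_surjective]
      rwa [gmap_toCotangent, Ideal.toCotangent_eq_zero] at hy
    obtain ⟨w, hw, hwz⟩ := (Ideal.mem_map_iff_of_surjective _ Ideal.Quotient.mk_surjective).mp hz
    have hzw : (z : B) - w ∈ maximalIdeal B := sub_mem z.2 (Ideal.pow_le_self two_ne_zero hw)
    have : (maximalIdeal B).toCotangent z = (maximalIdeal B).toCotangent ⟨z - w, hzw⟩ := by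
      rw [Ideal.toCotangent_eq]
      simpa using hw
    rw [this]
    exact subset_span ⟨_, Ideal.Quotient.eq.mp hwz.symm, rfl⟩
  · rintro _ ⟨z, hz, rfl⟩
    change gmap _ _ = 0
    rw [gmap_toCotangent, Ideal.toCotangent_eq_zero]
    simp [Ideal.Quotient.eq_zero_iff_mem.mpr hz]

theorem edim_eq_edim_quotient_add_delta [IsNoetherianRing B] (J : Ideal B) [Nontrivial (B ⧸ J)] :
    edim B = edim (B ⧸ J) + delta J := by
  let := Module.compHom (CotangentSpace (B ⧸ J)) (ResidueField.map (Ideal.Quotient.mk J))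
  have hσ : Function.Surjective (ResidueField.map (Ideal.Quotient.mk J)) := fun y => by
    obtain ⟨b, rfl⟩ := (residue_surjective.comp Ideal.Quotient.mk_surjective) y
    exact ⟨residue B b, ResidueField.map_residue _ b⟩
  rw [edim, ← (cotangentMap (Ideal.Quotient.mk J)).finrank_range_add_finrank_ker,
    (LinearMap.range_eq_top (f := cotangentMap _)).mpr (gmap_quotient_mk_surjective J),
    finrank_top, finrank_compHom_of_surjective _ hσ, ker_cotangentMap_quotient_mk, delta, edim]

theorem span_toCotangent_setOf_mem_map (φ : A →+* B) [IsLocalHom φ] {I : Ideal A}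
    (hI : I ≤ maximalIdeal A) :
    span (ResidueField B) ((maximalIdeal B).toCotangent '' {x | (x : B) ∈ I.map φ})
      = span (ResidueField B)
          (gmap φ '' ((maximalIdeal A).toCotangent '' {x | (x : A) ∈ I})) := by
  set S := span (ResidueField B)
    (gmap φ '' ((maximalIdeal A).toCotangent '' {x | (x : A) ∈ I}))
  refine le_antisymm (span_le.mpr ?_) (span_le.mpr ?_)
  · have hmap : I.map φ ≤
        ((S.restrictScalars B).comap (maximalIdeal B).toCotangent).map (maximalIdeal B).subtype :=
      Ideal.map_le_iff_le_comap.mpr fun a ha => ⟨⟨φ a, map_mem_maximalIdeal φ (hI ha)⟩, by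
        rw [SetLike.mem_coe, mem_comap, ← gmap_toCotangent φ ⟨a, hI ha⟩]
        exact subset_span ⟨_, ⟨_, ha, rfl⟩, rfl⟩, rfl⟩
    rintro _ ⟨z, hz, rfl⟩
    obtain ⟨w, hw, hwz⟩ := hmap hz
    rwa [← Subtype.ext hwz]
  · rintro _ ⟨_, ⟨x, hx, rfl⟩, rfl⟩
    rw [gmap_toCotangent]
    exact subset_span ⟨_, Ideal.mem_map_of_mem φ hx, rfl⟩

section ResidueAlgebra

variable [IsNoetherianRing A] (φ : A →+* B) [IsLocalHom φ]

theorem rd_add_delta_map_maximalIdeal :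
    rd φ + delta ((maximalIdeal A).map φ) = edim A := by
  let := (ResidueField.map φ).toAlgebra
  let := Module.compHom (CotangentSpace B) (ResidueField.map φ)
  have : IsScalarTower (ResidueField A) (ResidueField B) (CotangentSpace B) :=
    .of_algebraMap_smul fun _ _ => rfl
  rw [delta, span_toCotangent_setOf_mem_map φ le_rfl, image_toCotangent_setOf_mem_maximalIdeal,
    Set.image_univ]
  exact (cotangentMap φ).finrank_ker_liftBaseChange_add_finrank_span

theorem delta_map_eq_of_rd_eq_zero (h : rd φ = 0) {I : Ideal A} (hI : I ≠ ⊤) :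
    delta (I.map φ) = delta I := by
  let := (ResidueField.map φ).toAlgebra
  let := Module.compHom (CotangentSpace B) (ResidueField.map φ)
  have : IsScalarTower (ResidueField A) (ResidueField B) (CotangentSpace B) :=
    .of_algebraMap_smul fun _ _ => rfl
  rw [delta, span_toCotangent_setOf_mem_map φ (le_maximalIdeal hI)]
  exact (cotangentMap φ).finrank_span_image_of_injective_liftBaseChange
    (LinearMap.ker_eq_bot.mp (Submodule.finrank_eq_zero.mp h)) _

theorem basicallyRegular_iff_rd_eq_zero : BasicallyRegular φ ↔ rd φ = 0 := by
  let := (ResidueField.map φ).toAlgebra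
  let := Module.compHom (CotangentSpace B) (ResidueField.map φ)
  have : IsScalarTower (ResidueField A) (ResidueField B) (CotangentSpace B) :=
    .of_algebraMap_smul fun _ _ => rfl
  have key {r : ℕ} {x : Fin r → A} (hx : IsMinBasis (maximalIdeal A) x) :
      IsPartOfMinBasis (maximalIdeal B) (fun i => φ (x i)) ↔ rd φ = 0 := by
    let b := Basis.mk ((isPartOfMinBasis_maximalIdeal_iff x hx.1.1).mp hx.1)
      ((span_range_eq_maximalIdeal_iff x hx.1.1).mp hx.2).ge
    rw [isPartOfMinBasis_maximalIdeal_iff _ fun i => map_mem_maximalIdeal φ (hx.1.1 i),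
      rd, Submodule.finrank_eq_zero, LinearMap.ker_eq_bot,
      (cotangentMap φ).injective_liftBaseChange_iff b]
    congr! with i
    rw [Function.comp_apply, Basis.mk_apply]
    exact (gmap_toCotangent φ ⟨x i, hx.1.1 i⟩).symm
  obtain ⟨r, x, hx⟩ := exists_isMinBasis_maximalIdeal (R := A)
  exact ⟨fun h => (key hx).mp (h r x hx), fun h _ _ hx => (key hx).mpr h⟩

end ResidueAlgebra

end LocalHom

variable {A : Type*} [CommRing A] [IsLocalRing A] [IsNoetherianRing A]
variable {B : Type*} [CommRing B] [IsLocalRing B] [IsNoetherianRing B]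

/-- Theorem br:th1. -/
theorem stmt10 (φ : A →+* B) [IsLocalHom φ] :
    (BasicallyRegular φ ↔ rd φ = 0) ∧
    (BasicallyRegular φ ↔ edim B = edim A + edim (B ⧸ (maximalIdeal A).map φ)) ∧
    (BasicallyRegular φ ↔ ∀ (I : Ideal A), I ≠ ⊤ → delta I = delta (I.map φ)) := by
  have hBR := basicallyRegular_iff_rd_eq_zero φ
  have hrd := rd_add_delta_map_maximalIdeal φ
  have hedim := edim_eq_edim_quotient_add_delta ((maximalIdeal A).map φ)
  refine ⟨hBR, hBR.trans (by omega), hBR.trans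
    ⟨fun h I hI => (delta_map_eq_of_rd_eq_zero φ h hI).symm, fun h => ?_⟩⟩
  have := h _ (maximalIdeal.isMaximal A).ne_top
  rw [delta_maximalIdeal] at this
  omega
end

section
/- Let φ: (A,m,K) → (B,n,L) and ψ: (B,n,L) → (C,p,M) be local homomorphisms of noetherian local rings. Then rd(φ) ≤ rd(ψ∘φ) ≤ rd(φ) + rd(ψ). -/
/-!
After base change to the residue field `M` of `C`, the map `M ⊗_K m/m² → p/p²` of `ψ ∘ φ`
factors, through `M ⊗_L (L ⊗_K m/m²) ≅ M ⊗_K m/m²`, as the base change of the map of `φ`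
followed by the map of `ψ`. Base change along a field extension preserves nullity, and nullity
is monotone and subadditive under composition: `ker f ⊆ ker (g ∘ f)`, and `f` maps
`ker (g ∘ f)` into `ker g` with kernel `ker f`.
-/

open IsLocalRing

open Module LinearMap TensorProduct

section Nullity

variable {K V W U : Type*} [Field K] [AddCommGroup V] [Module K V] [AddCommGroup W] [Module K W]
  [AddCommGroup U] [Module K U]

theorem LinearMap.finrank_ker_le_finrank_ker_comp [FiniteDimensional K V] (f : V →ₗ[K] W)
    (g : W →ₗ[K] U) : finrank K (ker f) ≤ finrank K (ker (g ∘ₗ f)) :=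
  Submodule.finrank_mono (ker_le_ker_comp f g)

theorem LinearMap.finrank_ker_comp_le [FiniteDimensional K V] [FiniteDimensional K W]
    (f : V →ₗ[K] W) (g : W →ₗ[K] U) :
    finrank K (ker (g ∘ₗ f)) ≤ finrank K (ker f) + finrank K (ker g) := by
  set r := f.domRestrict (ker (g ∘ₗ f))
  have hrange : finrank K (range r) ≤ finrank K (ker g) := by
    refine Submodule.finrank_mono ?_
    rintro _ ⟨x, rfl⟩
    exact x.2
  have hker : finrank K (ker r) ≤ finrank K (ker f) := by
    rw [ker_domRestrict, ← Submodule.finrank_map_subtype_eq]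
    exact Submodule.finrank_mono ((Submodule.map_comap_le _ _).trans (by simp))
  have := r.finrank_range_add_finrank_ker
  omega

end Nullity

theorem LinearMap.finrank_ker_baseChange {K L V W : Type*} [Field K] [Field L] [Algebra K L]
    [AddCommGroup V] [Module K V] [AddCommGroup W] [Module K W] (f : V →ₗ[K] W) :
    finrank L (ker (f.baseChange L)) = finrank K (ker f) :=
  (tensorKerEquiv L L f).symm.finrank_eq.trans finrank_baseChange

theorem LinearMap.liftBaseChange_comp_cancelBaseChange {R S T V W U : Type*} [CommSemiring R]
    [CommSemiring S] [CommSemiring T] [Algebra R S] [Algebra S T] [Algebra R T]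
    [IsScalarTower R S T] [AddCommMonoid V] [Module R V] [AddCommMonoid W] [Module R W]
    [Module S W] [IsScalarTower R S W] [AddCommMonoid U] [Module R U] [Module S U] [Module T U]
    [IsScalarTower R S U] [IsScalarTower S T U] [IsScalarTower R T U]
    (f : V →ₗ[R] W) (g : W →ₗ[S] U) :
    (g.restrictScalars R ∘ₗ f).liftBaseChange T ∘ₗ
        (AlgebraTensorModule.cancelBaseChange R S T T V).toLinearMap =
      g.liftBaseChange T ∘ₗ (f.liftBaseChange S).baseChange T := by
  ext
  simp

section Tower

variable {K L M V W U : Type*} [Field K] [Field L] [Field M] [Algebra K L] [Algebra L M]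
  [Algebra K M] [IsScalarTower K L M] [AddCommGroup V] [Module K V]
  [AddCommGroup W] [Module K W] [Module L W] [IsScalarTower K L W]
  [AddCommGroup U] [Module K U] [Module L U] [Module M U]
  [IsScalarTower K L U] [IsScalarTower L M U] [IsScalarTower K M U]
  (f : V →ₗ[K] W) (g : W →ₗ[L] U)

theorem LinearMap.finrank_ker_liftBaseChange_comp :
    finrank M (ker ((g.restrictScalars K ∘ₗ f).liftBaseChange M)) =
      finrank M (ker (g.liftBaseChange M ∘ₗ (f.liftBaseChange L).baseChange M)) := by
  rw [← liftBaseChange_comp_cancelBaseChange, ker_comp]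
  exact ((AlgebraTensorModule.cancelBaseChange K L M M V).ofSubmodule' _).finrank_eq.symm

theorem LinearMap.finrank_ker_liftBaseChange_le_comp [FiniteDimensional K V] :
    finrank L (ker (f.liftBaseChange L)) ≤
      finrank M (ker ((g.restrictScalars K ∘ₗ f).liftBaseChange M)) := by
  rw [finrank_ker_liftBaseChange_comp, ← finrank_ker_baseChange (L := M) (f.liftBaseChange L)]
  exact finrank_ker_le_finrank_ker_comp _ _

theorem LinearMap.finrank_ker_liftBaseChange_comp_le [FiniteDimensional K V]
    [FiniteDimensional L W] :
    finrank M (ker ((g.restrictScalars K ∘ₗ f).liftBaseChange M)) ≤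
      finrank L (ker (f.liftBaseChange L)) + finrank M (ker (g.liftBaseChange M)) := by
  rw [finrank_ker_liftBaseChange_comp, ← finrank_ker_baseChange (L := M) (f.liftBaseChange L)]
  exact finrank_ker_comp_le _ _

end Tower

theorem gmap_comp {A B C : Type*} [CommRing A] [IsLocalRing A] [CommRing B] [IsLocalRing B]
    [CommRing C] [IsLocalRing C] (φ : A →+* B) [IsLocalHom φ] (ψ : B →+* C) [IsLocalHom ψ] :
    gmap (ψ.comp φ) = gmap ψ ∘ₗ gmap φ := by
  ext x
  obtain ⟨x, rfl⟩ := Ideal.toCotangent_surjective _ x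
  exact Ideal.mapCotangent_toCotangent _ _ _ _ x

variable {A : Type*} [CommRing A] [IsLocalRing A] [IsNoetherianRing A]
variable {B : Type*} [CommRing B] [IsLocalRing B] [IsNoetherianRing B]

variable {C : Type*} [CommRing C] [IsLocalRing C] [IsNoetherianRing C]

/-- Corollary rs:cor4, inequalities: `rd(φ) ≤ rd(ψ∘φ) ≤ rd(φ) + rd(ψ)`. -/
theorem stmt14 (φ : A →+* B) [IsLocalHom φ] (ψ : B →+* C) [IsLocalHom ψ] :
    rd φ ≤ rd (ψ.comp φ) ∧ rd (ψ.comp φ) ≤ rd φ + rd ψ := by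
  -- `letI`, not `let`: the structures must unfold to those built into `rd`.
  letI : Algebra (ResidueField A) (ResidueField B) := (ResidueField.map φ).toAlgebra
  letI : Algebra (ResidueField B) (ResidueField C) := (ResidueField.map ψ).toAlgebra
  letI : Algebra (ResidueField A) (ResidueField C) := (ResidueField.map (ψ.comp φ)).toAlgebra
  letI : Module (ResidueField A) (CotangentSpace B) := Module.compHom _ (ResidueField.map φ)
  letI : Module (ResidueField B) (CotangentSpace C) := Module.compHom _ (ResidueField.map ψ)
  letI : Module (ResidueField A) (CotangentSpace C) :=
    Module.compHom _ (ResidueField.map (ψ.comp φ))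
  have hmap := ResidueField.map_comp φ ψ
  have : IsScalarTower (ResidueField A) (ResidueField B) (ResidueField C) :=
    .of_algebraMap_eq' hmap
  have : IsScalarTower (ResidueField A) (ResidueField B) (CotangentSpace B) :=
    .of_algebraMap_smul fun _ _ => rfl
  have : IsScalarTower (ResidueField B) (ResidueField C) (CotangentSpace C) :=
    .of_algebraMap_smul fun _ _ => rfl
  have : IsScalarTower (ResidueField A) (ResidueField C) (CotangentSpace C) :=
    .of_algebraMap_smul fun _ _ => rfl
  have : IsScalarTower (ResidueField A) (ResidueField B) (CotangentSpace C) :=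
    .of_algebraMap_smul fun k x => congrArg (· • x) (RingHom.congr_fun hmap k).symm
  have hcomp : cotangentMap (ψ.comp φ) =
      (cotangentMap ψ).restrictScalars (ResidueField A) ∘ₗ cotangentMap φ :=
    LinearMap.ext fun v => LinearMap.congr_fun (gmap_comp φ ψ) v
  unfold rd
  rw [hcomp]
  exact ⟨finrank_ker_liftBaseChange_le_comp _ _, finrank_ker_liftBaseChange_comp_le _ _⟩
end

section
/- Let φ: (A,m,K) → (B,n,L) be a basically regular local homomorphism of noetherian local rings with A not artinian, and let J ⊆ n² be an ideal of B. Then the composite A → B → B/n² is basically regular but not flat. -/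
open IsLocalRing

/-! Since the square of the maximal ideal of `B/n²` vanishes, a relation `∑ cᵢ φ(xᵢ) ∈ (n/n²)²`
lifts to `∑ bᵢ φ(xᵢ) ∈ n²`, so basic regularity passes to `A → B/n²`. If that map were flat it
would be faithfully flat (being local), hence injective, which would force `m² = 0`; but a
noetherian local ring with nilpotent maximal ideal is artinian. -/

section

variable {A B : Type*} [CommRing A] [IsLocalRing A] [CommRing B] [IsLocalRing B]

namespace IsLocalRing

theorem mk_mem_maximalIdeal_quotient_iff (I : Ideal B) [Nontrivial (B ⧸ I)] {b : B} :
    Ideal.Quotient.mk I b ∈ maximalIdeal (B ⧸ I) ↔ b ∈ maximalIdeal B := by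
  rw [← Ideal.mem_comap, maximalIdeal_comap]

theorem maximalIdeal_quotient_sq_eq_bot :
    maximalIdeal (B ⧸ maximalIdeal B ^ 2) ^ 2 = ⊥ := by
  rw [← map_maximalIdeal_of_surjective _ Ideal.Quotient.mk_surjective, ← Ideal.map_pow,
    Ideal.map_quotient_self]

theorem maximalIdeal_sq_eq_bot_of_injective (φ : A →+* B) [IsLocalHom φ]
    (hφ : Function.Injective φ) (hB : maximalIdeal B ^ 2 = ⊥) : maximalIdeal A ^ 2 = ⊥ := by
  rw [← Ideal.map_eq_bot_iff_of_injective hφ, Ideal.map_pow, ← le_bot_iff, ← hB]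
  exact Ideal.pow_right_mono (map_maximalIdeal_le φ) 2

end IsLocalRing

theorem RingHom.Flat.injective_of_isLocalHom {φ : A →+* B} [IsLocalHom φ] (hφ : φ.Flat) :
    Function.Injective φ := by
  algebraize [φ]
  have := Module.FaithfullyFlat.of_flat_of_isLocalHom (A := A) (B := B)
  exact FaithfulSMul.algebraMap_injective A B

theorem RingHom.not_flat_of_maximalIdeal_sq_eq_bot [IsNoetherianRing A] (φ : A →+* B)
    [IsLocalHom φ] (hA : ¬ IsArtinianRing A) (hB : maximalIdeal B ^ 2 = ⊥) : ¬ φ.Flat :=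
  fun hφ => hA <| (isArtinianRing_iff_isNilpotent_maximalIdeal A).2
    ⟨2, maximalIdeal_sq_eq_bot_of_injective φ hφ.injective_of_isLocalHom hB⟩

theorem IsPartOfMinBasis.quotient {r : ℕ} {y : Fin r → B}
    (hy : IsPartOfMinBasis (maximalIdeal B) y) (I : Ideal B) [Nontrivial (B ⧸ I)]
    (hI : I ≤ maximalIdeal B ^ 2) :
    IsPartOfMinBasis (maximalIdeal (B ⧸ I)) (fun i => Ideal.Quotient.mk I (y i)) := by
  refine ⟨fun i => (mk_mem_maximalIdeal_quotient_iff I).2 (hy.1 i), fun c hc => ?_⟩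
  obtain ⟨b, rfl⟩ := Ideal.Quotient.mk_surjective.comp_left c
  rw [← map_maximalIdeal_of_surjective _ Ideal.Quotient.mk_surjective, ← Ideal.map_mul] at hc
  simp only [Function.comp_apply, ← map_mul, ← map_sum] at hc
  rw [Ideal.mem_quotient_iff_mem (sq (maximalIdeal B) ▸ hI)] at hc
  exact fun i => (mk_mem_maximalIdeal_quotient_iff I).2 (hy.2 b hc i)

theorem BasicallyRegular.comp_quotientMk {φ : A →+* B} (hφ : BasicallyRegular φ) (I : Ideal B)
    [Nontrivial (B ⧸ I)] (hI : I ≤ maximalIdeal B ^ 2) :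
    BasicallyRegular ((Ideal.Quotient.mk I).comp φ) :=
  fun r x hx => (hφ r x hx).quotient I hI

end

variable {A : Type*} [CommRing A] [IsLocalRing A] [IsNoetherianRing A]
variable {B : Type*} [CommRing B] [IsLocalRing B] [IsNoetherianRing B]

theorem stmt19_general (φ : A →+* B) [IsLocalHom φ] (hbr : BasicallyRegular φ)
    (hA : ¬ IsArtinianRing A) :
    BasicallyRegular ((Ideal.Quotient.mk ((maximalIdeal B) ^ 2)).comp φ) ∧
    ¬ ((Ideal.Quotient.mk ((maximalIdeal B) ^ 2)).comp φ).Flat :=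
  ⟨hbr.comp_quotientMk _ le_rfl,
    RingHom.not_flat_of_maximalIdeal_sq_eq_bot _ hA maximalIdeal_quotient_sq_eq_bot⟩

/-- Proposition rs:cor10(2): if `φ` is basically regular and `A` is not
artinian, then `A → B/n²` is basically regular and not flat. -/
theorem stmt19 (φ : A →+* B) [IsLocalHom φ] (hbr : BasicallyRegular φ)
    (hA : ¬ IsArtinianRing A) (J : Ideal B) (hJ : J ≤ (maximalIdeal B) ^ 2) :
    BasicallyRegular ((Ideal.Quotient.mk ((maximalIdeal B) ^ 2)).comp φ) ∧
    ¬ ((Ideal.Quotient.mk ((maximalIdeal B) ^ 2)).comp φ).Flat :=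
  stmt19_general φ hbr hA
end
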